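/- arXiv:1310.2410 — 4 statements merged into one kernel-verified Lean document; each statement's English description precedes it below -/
import Mathlib

section
/- Let 0 < q < 1, let T ⊆ {1,…,p}, and let x, h ∈ ℝ^p with supp(x) ⊆ T. If ‖x + h‖_q^q ≤ ‖x‖_q^q, then ‖h_{T^c}‖_q^q ≤ ‖h_T‖_q^q, where h_T (resp. h_{T^c}) denotes h with all entries outside T (resp. inside T) set to zero. -/
open scoped BigOperators

/-- `‖v‖_q^q = ∑ |v i|^q` for `v ∈ ℝ^p`. -/
noncomputable def lqq (q : ℝ) {p : ℕ} (v : Fin p → ℝ) : ℝ := ∑ i, |v i| ^ q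

/-- The `ℓ_q` quasinorm `(∑ |v i|^q)^(1/q)`. -/
noncomputable def lqNorm (q : ℝ) {p : ℕ} (v : Fin p → ℝ) : ℝ := (∑ i, |v i| ^ q) ^ (1/q)

/-- Euclidean norm on `ℝ^p`. -/
noncomputable def l2Norm {p : ℕ} (v : Fin p → ℝ) : ℝ := Real.sqrt (∑ i, (v i) ^ 2)

/-- `ℓ_1` norm on `ℝ^p`. -/
noncomputable def l1Norm {p : ℕ} (v : Fin p → ℝ) : ℝ := ∑ i, |v i|

/-- `ℓ_∞` norm on `ℝ^p`. -/
noncomputable def linfNorm {p : ℕ} (v : Fin p → ℝ) : ℝ := ⨆ i, |v i|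

open Classical in
/-- `‖v‖_0`: number of nonzero entries of `v`. -/
noncomputable def l0 {p : ℕ} (v : Fin p → ℝ) : ℕ := (Finset.univ.filter (fun i => v i ≠ 0)).card

/-- `v` is `k`-sparse if it has at most `k` nonzero entries. -/
def Sparse {p : ℕ} (k : ℕ) (v : Fin p → ℝ) : Prop := l0 v ≤ k

/-- The `m`-order restricted isometry constant of `A`: the infimum of those `δ ≥ 0` such
that `(1-δ)‖x‖₂² ≤ ‖Ax‖₂² ≤ (1+δ)‖x‖₂²` for all `m`-sparse `x`. -/
noncomputable def ric {n p : ℕ} (A : Matrix (Fin n) (Fin p) ℝ) (m : ℕ) : ℝ :=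
  sInf {δ : ℝ | 0 ≤ δ ∧ ∀ x : Fin p → ℝ, Sparse m x →
    (1 - δ) * (∑ i, (x i) ^ 2) ≤ (∑ i, (A.mulVec x i) ^ 2) ∧
    (∑ i, (A.mulVec x i) ^ 2) ≤ (1 + δ) * (∑ i, (x i) ^ 2)}

/-- The spectral norm of `A`: the least `c ≥ 0` with `‖Av‖₂ ≤ c‖v‖₂` for all `v`. -/
noncomputable def specNorm {n p : ℕ} (A : Matrix (Fin n) (Fin p) ℝ) : ℝ :=
  sInf {c : ℝ | 0 ≤ c ∧ ∀ v : Fin p → ℝ, l2Norm (A.mulVec v) ≤ c * l2Norm v}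

/-- `vk` is a version of `v` with all but the `k` largest-magnitude entries set to zero. -/
def IsMaxK {p : ℕ} (k : ℕ) (v vk : Fin p → ℝ) : Prop :=
  ∃ T : Finset (Fin p), T.card = min k p ∧
    (∀ i ∈ T, ∀ j ∉ T, |v j| ≤ |v i|) ∧
    vk = fun i => if i ∈ T then v i else 0

/-- Subadditivity of `t ↦ t^q` for `0 ≤ q ≤ 1` on nonnegative reals. -/
lemma rpow_subadd {q a b : ℝ} (hq0 : 0 ≤ q) (hq1 : q ≤ 1) (ha : 0 ≤ a) (hb : 0 ≤ b) :
    (a + b) ^ q ≤ a ^ q + b ^ q := by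
  have h := NNReal.rpow_add_le_add_rpow a.toNNReal b.toNNReal hq0 hq1
  have h2 := NNReal.coe_le_coe.mpr h
  rwa [NNReal.coe_add, NNReal.coe_rpow, NNReal.coe_rpow, NNReal.coe_rpow, NNReal.coe_add,
    Real.coe_toNNReal _ ha, Real.coe_toNNReal _ hb] at h2

open Classical in
/-- **Cone condition from `ℓ_q`-minimality.** If `supp x ⊆ T` and `‖x+h‖_q^q ≤ ‖x‖_q^q`,
then `‖h_{T^c}‖_q^q ≤ ‖h_T‖_q^q`. -/
theorem cone_condition_of_lqq_le {p : ℕ} (q : ℝ) (hq0 : 0 < q) (hq1 : q < 1)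
    (T : Finset (Fin p)) (x h : Fin p → ℝ)
    (hsupp : ∀ i, x i ≠ 0 → i ∈ T)
    (hle : lqq q (x + h) ≤ lqq q x) :
    lqq q (fun i => if i ∈ T then (0 : ℝ) else h i) ≤
      lqq q (fun i => if i ∈ T then h i else 0) := by
  have hz : (0 : ℝ) ^ q = 0 := Real.zero_rpow hq0.ne'
  have hxoff : ∀ i ∉ T, x i = 0 := fun i hi => by
    by_contra hx; exact hi (hsupp i hx)
  have hL : lqq q (fun i => if i ∈ T then (0 : ℝ) else h i) =
      ∑ i ∈ Finset.univ.filter (fun i => ¬ i ∈ T), |h i| ^ q := by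
    rw [lqq, show (fun i => |if i ∈ T then (0:ℝ) else h i| ^ q)
        = fun i => if i ∈ T then 0 else |h i| ^ q from
      funext fun i => by split <;> simp [hz], Finset.sum_ite]
    simp
  have hR : lqq q (fun i => if i ∈ T then h i else 0) = ∑ i ∈ T, |h i| ^ q := by
    rw [lqq, show (fun i => |if i ∈ T then h i else (0:ℝ)| ^ q)
        = fun i => if i ∈ T then |h i| ^ q else 0 from
      funext fun i => by split <;> simp [hz], Finset.sum_ite]
    simp [Finset.filter_mem_eq_inter]
  rw [hL, hR]
  have hsplit : ∀ v : Fin p → ℝ, lqq q v =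
      ∑ i ∈ T, |v i| ^ q + ∑ i ∈ Finset.univ.filter (fun i => ¬ i ∈ T), |v i| ^ q := by
    intro v
    rw [lqq, ← Finset.sum_filter_add_sum_filter_not Finset.univ (fun i => i ∈ T)]
    congr 1
    rw [Finset.filter_mem_eq_inter, Finset.univ_inter]
  rw [hsplit (x + h), hsplit x] at hle
  have hx2 : ∑ i ∈ Finset.univ.filter (fun i => ¬ i ∈ T), |x i| ^ q = 0 := by
    refine Finset.sum_eq_zero fun i hi => ?_
    simp only [Finset.mem_filter] at hi
    rw [hxoff i hi.2, abs_zero, hz]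
  have hxh2 : ∑ i ∈ Finset.univ.filter (fun i => ¬ i ∈ T), |(x + h) i| ^ q =
      ∑ i ∈ Finset.univ.filter (fun i => ¬ i ∈ T), |h i| ^ q := by
    refine Finset.sum_congr rfl fun i hi => ?_
    simp only [Finset.mem_filter] at hi
    rw [Pi.add_apply, hxoff i hi.2, zero_add]
  rw [hx2, hxh2, add_zero] at hle
  have key : ∑ i ∈ T, |x i| ^ q ≤ ∑ i ∈ T, |(x + h) i| ^ q + ∑ i ∈ T, |h i| ^ q := by
    rw [← Finset.sum_add_distrib]
    refine Finset.sum_le_sum fun i _ => ?_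
    calc |x i| ^ q ≤ (|(x + h) i| + |h i|) ^ q := by
          refine Real.rpow_le_rpow (abs_nonneg _) ?_ hq0.le
          have hxi : x i = (x + h) i + (-(h i)) := by simp
          rw [hxi]
          simpa using abs_add_le ((x + h) i) (-(h i))
      _ ≤ |(x + h) i| ^ q + |h i| ^ q :=
          rpow_subadd hq0.le hq1.le (abs_nonneg _) (abs_nonneg _)
  linarith
end

section
/- Let 0 < q < 1, let k be a positive integer, and let h ∈ ℝ^p. If ‖h_{-max(k)}‖_q^q ≤ ‖h_{max(k)}‖_q^q, then ‖h_{-max(k)}‖_2 ≤ ‖h_{max(k)}‖_2, and consequently ‖h‖_2 ≤ √2·‖h_{max(k)}‖_2. -/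
open scoped BigOperators

/-- If `‖h_{-max(k)}‖_q^q ≤ ‖h_{max(k)}‖_q^q` then `‖h_{-max(k)}‖₂ ≤ ‖h_{max(k)}‖₂`, and
consequently `‖h‖₂ ≤ √2 ‖h_{max(k)}‖₂`. -/
theorem l2_tail_le_of_lqq_tail_le {p : ℕ} (q : ℝ) (hq0 : 0 < q) (hq1 : q < 1)
    (k : ℕ) (hk : 0 < k) (h hmaxk : Fin p → ℝ) (hmax : IsMaxK k h hmaxk)
    (hcone : lqq q (h - hmaxk) ≤ lqq q hmaxk) :
    l2Norm (h - hmaxk) ≤ l2Norm hmaxk ∧ l2Norm h ≤ Real.sqrt 2 * l2Norm hmaxk := by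
  classical
  obtain ⟨T, hTcard, hTmax, hvk⟩ := hmax
  have hq2 : (0:ℝ) < 2 - q := by linarith
  have htail : ∀ i, (h - hmaxk) i = if i ∈ T then 0 else h i := by
    intro i
    simp only [Pi.sub_apply, hvk]
    by_cases hi : i ∈ T <;> simp [hi]
  have e1 : lqq q (h - hmaxk) = ∑ i ∈ Tᶜ, |h i| ^ q := by
    rw [lqq, ← Finset.sum_add_sum_compl T]
    have h1 : ∑ i ∈ T, |(h - hmaxk) i| ^ q = 0 := by
      refine Finset.sum_eq_zero fun i hi => ?_
      rw [htail]
      simp [hi, Real.zero_rpow hq0.ne']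
    rw [h1, zero_add]
    refine Finset.sum_congr rfl fun i hi => ?_
    rw [Finset.mem_compl] at hi
    rw [htail]
    simp [hi]
  have e2 : lqq q hmaxk = ∑ i ∈ T, |h i| ^ q := by
    rw [lqq, ← Finset.sum_add_sum_compl T]
    have h1 : ∑ i ∈ Tᶜ, |hmaxk i| ^ q = 0 := by
      refine Finset.sum_eq_zero fun i hi => ?_
      rw [Finset.mem_compl] at hi
      simp [hvk, hi, Real.zero_rpow hq0.ne']
    rw [h1, add_zero]
    refine Finset.sum_congr rfl fun i hi => ?_
    simp [hvk, hi]
  have e3 : ∑ i, ((h - hmaxk) i) ^ 2 = ∑ i ∈ Tᶜ, (h i) ^ 2 := by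
    rw [← Finset.sum_add_sum_compl T]
    have h1 : ∑ i ∈ T, ((h - hmaxk) i) ^ 2 = 0 := by
      refine Finset.sum_eq_zero fun i hi => ?_
      rw [htail]; simp [hi]
    rw [h1, zero_add]
    refine Finset.sum_congr rfl fun i hi => ?_
    rw [Finset.mem_compl] at hi
    rw [htail]; simp [hi]
  have e4 : ∑ i, (hmaxk i) ^ 2 = ∑ i ∈ T, (h i) ^ 2 := by
    rw [← Finset.sum_add_sum_compl T]
    have h1 : ∑ i ∈ Tᶜ, (hmaxk i) ^ 2 = 0 := by
      refine Finset.sum_eq_zero fun i hi => ?_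
      rw [Finset.mem_compl] at hi
      simp [hvk, hi]
    rw [h1, add_zero]
    refine Finset.sum_congr rfl fun i hi => ?_
    simp [hvk, hi]
  rw [e1, e2] at hcone
  have key : ∑ i ∈ Tᶜ, (h i) ^ 2 ≤ ∑ i ∈ T, (h i) ^ 2 := by
    by_cases hT : T.Nonempty
    · obtain ⟨i0, hi0T, hmin⟩ := Finset.exists_min_image T (fun i => |h i|) hT
      set M := |h i0| with hM
      have hM0 : 0 ≤ M := abs_nonneg _
      have stepA : ∀ j ∈ Tᶜ, (h j) ^ 2 ≤ |h j| ^ q * M ^ (2 - q) := by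
        intro j hj
        rw [Finset.mem_compl] at hj
        have hb : |h j| ≤ M := hTmax i0 hi0T j hj
        have hb0 : (0:ℝ) ≤ |h j| := abs_nonneg _
        have h2 : (h j) ^ 2 = |h j| ^ q * |h j| ^ (2 - q) := by
          rw [← Real.rpow_add' hb0 (by norm_num : q + (2 - q) ≠ 0)]
          have : q + (2 - q) = (2:ℝ) := by ring
          rw [this, Real.rpow_two, sq_abs]
        rw [h2]
        exact mul_le_mul_of_nonneg_left
          (Real.rpow_le_rpow hb0 hb hq2.le) (Real.rpow_nonneg hb0 q)
      have stepB : ∀ i ∈ T, |h i| ^ q * M ^ (2 - q) ≤ (h i) ^ 2 := by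
        intro i hi
        have hb : M ≤ |h i| := hmin i hi
        have hb0 : (0:ℝ) ≤ |h i| := abs_nonneg _
        have h2 : (h i) ^ 2 = |h i| ^ q * |h i| ^ (2 - q) := by
          rw [← Real.rpow_add' hb0 (by norm_num : q + (2 - q) ≠ 0)]
          have : q + (2 - q) = (2:ℝ) := by ring
          rw [this, Real.rpow_two, sq_abs]
        rw [h2]
        exact mul_le_mul_of_nonneg_left
          (Real.rpow_le_rpow hM0 hb hq2.le) (Real.rpow_nonneg hb0 q)
      calc ∑ i ∈ Tᶜ, (h i) ^ 2 ≤ ∑ i ∈ Tᶜ, |h i| ^ q * M ^ (2 - q) :=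
            Finset.sum_le_sum stepA
        _ = (∑ i ∈ Tᶜ, |h i| ^ q) * M ^ (2 - q) := by rw [Finset.sum_mul]
        _ ≤ (∑ i ∈ T, |h i| ^ q) * M ^ (2 - q) :=
            mul_le_mul_of_nonneg_right hcone (Real.rpow_nonneg hM0 _)
        _ = ∑ i ∈ T, |h i| ^ q * M ^ (2 - q) := by rw [Finset.sum_mul]
        _ ≤ ∑ i ∈ T, (h i) ^ 2 := Finset.sum_le_sum stepB
    · rw [Finset.not_nonempty_iff_eq_empty] at hT
      subst hT
      have hz : ∀ i ∈ (∅ : Finset (Fin p))ᶜ, |h i| ^ q = 0 := by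
        have h0 : (∑ i ∈ (∅ : Finset (Fin p))ᶜ, |h i| ^ q) ≤ 0 := by
          simpa using hcone
        intro i hi
        have := Finset.sum_le_sum_of_subset_of_nonneg (Finset.singleton_subset_iff.mpr hi)
          (fun j _ _ => Real.rpow_nonneg (abs_nonneg (h j)) q)
        have h1 : |h i| ^ q ≤ 0 := by
          calc |h i| ^ q = ∑ j ∈ {i}, |h j| ^ q := by simp
            _ ≤ ∑ j ∈ (∅ : Finset (Fin p))ᶜ, |h j| ^ q := this
            _ ≤ 0 := h0
        exact le_antisymm h1 (Real.rpow_nonneg (abs_nonneg _) q)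
      have : ∀ i ∈ (∅ : Finset (Fin p))ᶜ, (h i) ^ 2 = 0 := by
        intro i hi
        have := (Real.rpow_eq_zero (abs_nonneg (h i)) hq0.ne').mp (hz i hi)
        rw [abs_eq_zero] at this
        simp [this]
      rw [Finset.sum_eq_zero this]
      simp
  constructor
  · rw [l2Norm, l2Norm, e3, e4]
    exact Real.sqrt_le_sqrt key
  · have hsum : ∑ i, (h i) ^ 2 ≤ 2 * ∑ i, (hmaxk i) ^ 2 := by
      rw [e4, ← Finset.sum_add_sum_compl T (fun i => (h i) ^ 2)]
      linarith [key]
    rw [l2Norm, l2Norm]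
    calc Real.sqrt (∑ i, (h i) ^ 2) ≤ Real.sqrt (2 * ∑ i, (hmaxk i) ^ 2) :=
          Real.sqrt_le_sqrt hsum
      _ = Real.sqrt 2 * Real.sqrt (∑ i, (hmaxk i) ^ 2) := Real.sqrt_mul (by norm_num) _
end

section
/- Let 0 < q < 1, let k be a positive integer, let s > 0, and let A ∈ ℝ^{n×p}. Suppose the ⌈(s^q+1)k⌉-order restricted isometry constant of A satisfies δ_{(s^q+1)k} < 1/√(s^{q-2}+1). Then for every h ∈ ℝ^p with Ah = 0 and ‖h_{-max(k)}‖_q^q ≤ ‖h_{max(k)}‖_q^q, one has h = 0. -/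
open scoped BigOperators

/-!
Normalise `h` so that `‖h_T‖_q^q = s^q k` on the support `T` of its `k` largest entries, and let
`G` be `T` together with every entry of modulus `> 1`. The cone condition gives
`|G| ≤ (s^q + 1) k ≤ m`, and the tail `h - h_G` has entries bounded by `1` and `ℓ¹` mass at most
`r = m - |G|`. By the sparse representation of Cai and Zhang the tail is a convex combination of
`r`-sparse vectors `u` supported off `G`, with `‖u‖₂² ≤ s^(q-2) ‖h_G‖₂²` by Hölder's inequality.
The RIP applied to `h_G + μ u` and `-ν h_G + μ u` (with `ν = 1 - 2μ`) yields an inequality that is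
affine in `u`, hence holds for the tail itself, whose image under `A` is `-A h_G`; the choice
`μ = 1 / (1 + √(s^(q-2) + 1))` then forces `δ_m √(s^(q-2) + 1) ≥ 1`.
-/

open Finset Matrix

section SparseDecomposition

variable {ι : Type*} [DecidableEq ι]

def shiftMass (w : ι → ℝ) (a b : ι) (t : ℝ) : ι → ℝ := w + t • (Pi.single b 1 - Pi.single a 1)

lemma shiftMass_apply {w : ι → ℝ} {a b : ι} (hab : a ≠ b) (t : ℝ) (i : ι) :
    shiftMass w a b t i = if i = a then w a - t else if i = b then w b + t else w i := by
  by_cases hia : i = a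
  · subst hia; simp [shiftMass, hab]; ring
  · by_cases hib : i = b
    · subst hib; simp [shiftMass, hia]
    · simp [shiftMass, hia, hib]

variable [Fintype ι]

lemma card_support_le_of_card_frac_le_one {α : ℝ} (hα : 0 < α) {r : ℕ} {w : ι → ℝ}
    (hw : ∀ i, w i ∈ Set.Icc 0 α) (hsum : ∑ i, w i ≤ r * α)
    (hfrac : #{i | w i ∈ Set.Ioo 0 α} ≤ 1) : #{i | w i ≠ 0} ≤ r := by
  set P : Finset ι := {i | w i ∈ Set.Ioo 0 α}
  set F : Finset ι := {i | w i = α}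
  have hdisj : Disjoint P F := by
    simp only [P, F, disjoint_filter, Set.mem_Ioo]
    exact fun i _ hi => hi.2.ne
  have hsupp : ({i | w i ≠ 0} : Finset ι) = P ∪ F := by
    ext i
    have := hw i
    simp only [Set.mem_Icc, Set.mem_Ioo, mem_filter, mem_univ, true_and, mem_union, P, F] at this ⊢
    constructor
    · intro h0; by_cases hα' : w i = α
      · exact .inr hα'
      · exact .inl ⟨lt_of_le_of_ne this.1 (Ne.symm h0), lt_of_le_of_ne this.2 hα'⟩
    · rintro (h | h) <;> [exact h.1.ne'; exact h ▸ hα.ne']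
  have hmass : #F * α + ∑ i ∈ P, w i ≤ r * α := calc
    #F * α + ∑ i ∈ P, w i = ∑ i ∈ P ∪ F, w i := by
      rw [sum_union hdisj, add_comm, sum_congr rfl fun i hi => (mem_filter.mp hi).2, sum_const,
        nsmul_eq_mul]
    _ ≤ ∑ i, w i := sum_le_sum_of_subset_of_nonneg (subset_univ _) fun i _ _ => (hw i).1
    _ ≤ r * α := hsum
  rw [hsupp, card_union_of_disjoint hdisj]
  rcases Nat.le_one_iff_eq_zero_or_eq_one.mp hfrac with hP | hP
  · rw [card_eq_zero.mp hP, sum_empty, add_zero] at hmass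
    rw [hP, zero_add]
    exact_mod_cast le_of_mul_le_mul_right hmass hα
  · obtain ⟨x, hx⟩ := card_eq_one.mp hP
    have hxpos : 0 < w x := (mem_filter.mp (hx ▸ mem_singleton_self x)).2.1
    rw [hx, sum_singleton] at hmass
    have : (#F : ℝ) < r := lt_of_mul_lt_mul_right (by linarith) hα.le
    rw [hP]
    have : #F < r := by exact_mod_cast this
    omega

lemma sum_shiftMass (w : ι → ℝ) (a b : ι) (t : ℝ) : ∑ i, shiftMass w a b t i = ∑ i, w i := by
  simp [shiftMass, sum_add_distrib, ← mul_sum, sum_sub_distrib]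

lemma exists_shift_of_frac {α : ℝ} {w : ι → ℝ} {a b : ι} (hab : a ≠ b)
    (hw : ∀ i, w i ∈ Set.Icc 0 α) (ha : w a ∈ Set.Ioo 0 α) (hb : w b ∈ Set.Ioo 0 α) :
    ∃ t > 0, (∀ i, shiftMass w a b t i ∈ Set.Icc 0 α) ∧
      (∀ i, w i = 0 → shiftMass w a b t i = 0) ∧
      #{i | shiftMass w a b t i ∈ Set.Ioo 0 α} < #{i | w i ∈ Set.Ioo 0 α} := by
  obtain ⟨ha0, haα⟩ := ha
  obtain ⟨hb0, hbα⟩ := hb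
  set t := min (w a) (α - w b)
  have ht0 : 0 < t := lt_min ha0 (by linarith)
  refine ⟨t, ht0, ?_⟩
  have happly := shiftMass_apply (w := w) hab t
  have hta : t ≤ w a := min_le_left _ _
  have htb : t ≤ α - w b := min_le_right _ _
  have hbox : ∀ i, shiftMass w a b t i ∈ Set.Icc 0 α := by
    intro i
    rw [happly]
    split_ifs with hia hib
    · constructor <;> linarith
    · constructor <;> linarith
    · exact hw i
  refine ⟨hbox, ?_, ?_⟩
  · intro i hi
    rw [happly, if_neg (by rintro rfl; exact ha0.ne' hi), if_neg (by rintro rfl; exact hb0.ne' hi),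
      hi]
  · apply card_lt_card
    rw [Finset.ssubset_iff_of_subset]
    · rcases min_choice (w a) (α - w b) with h | h
      · refine ⟨a, by simp [ha0, haα], ?_⟩
        simp [happly, ← show t = w a from h]
      · refine ⟨b, by simp [hb0, hbα], ?_⟩
        simp only [mem_filter, mem_univ, true_and, happly, if_neg hab.symm, if_true, Set.mem_Ioo]
        rintro ⟨-, hlt⟩
        linarith [show t = α - w b from h]
    · intro i
      simp only [mem_filter, mem_univ, true_and, happly]
      split_ifs with hia hib
      · subst hia; exact fun _ => ⟨ha0, haα⟩
      · subst hib; exact fun _ => ⟨hb0, hbα⟩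
      · exact id

theorem mem_convexHull_nonneg_sparse {α : ℝ} (hα : 0 < α) {r : ℕ} {w : ι → ℝ}
    (hw : ∀ i, w i ∈ Set.Icc 0 α) (hsum : ∑ i, w i ≤ r * α) :
    w ∈ convexHull ℝ {u | (∀ i, u i ∈ Set.Icc 0 α) ∧ (∀ i, w i = 0 → u i = 0) ∧
      #{i | u i ≠ 0} ≤ r ∧ ∑ i, u i = ∑ i, w i} := by
  induction hN : #{i | w i ∈ Set.Ioo 0 α} using Nat.strong_induction_on generalizing w with
  | _ N ih =>
  by_cases hsupp : #{i | w i ≠ 0} ≤ r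
  · exact subset_convexHull ℝ _ ⟨hw, fun _ h => h, hsupp, rfl⟩
  obtain ⟨a, ha, b, hb, hab⟩ := one_lt_card.mp <|
    not_le.mp (mt (card_support_le_of_card_frac_le_one hα hw hsum) hsupp)
  simp only [mem_filter, mem_univ, true_and] at ha hb
  have hpiece : ∀ w' : ι → ℝ, (∀ i, w' i ∈ Set.Icc 0 α) → (∀ i, w i = 0 → w' i = 0) →
      ∑ i, w' i = ∑ i, w i → #{i | w' i ∈ Set.Ioo 0 α} < N →
      w' ∈ convexHull ℝ {u | (∀ i, u i ∈ Set.Icc 0 α) ∧ (∀ i, w i = 0 → u i = 0) ∧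
        #{i | u i ≠ 0} ≤ r ∧ ∑ i, u i = ∑ i, w i} := by
    intro w' hw' hzero hsum' hN'
    refine convexHull_mono ?_ (ih _ hN' hw' (hsum' ▸ hsum) rfl)
    rintro u ⟨hu, huzero, hucard, husum⟩
    exact ⟨hu, fun i hi => huzero i (hzero i hi), hucard, husum.trans hsum'⟩
  -- `w` lies strictly between two shifts along `e_b - e_a`, each with fewer fractional entries
  obtain ⟨t₁, ht₁, hw₁, hzero₁, hN₁⟩ := exists_shift_of_frac hab hw ha hb
  obtain ⟨t₂, ht₂, hw₂, hzero₂, hN₂⟩ := exists_shift_of_frac hab.symm hw hb ha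
  have hcombo :
      (t₂ / (t₁ + t₂)) • shiftMass w a b t₁ + (t₁ / (t₁ + t₂)) • shiftMass w b a t₂ = w := by
    unfold shiftMass
    match_scalars <;> field_simp <;> ring
  have := convex_convexHull ℝ _ (a := t₂ / (t₁ + t₂)) (b := t₁ / (t₁ + t₂))
    (hpiece _ hw₁ hzero₁ (sum_shiftMass w a b t₁) (hN ▸ hN₁))
    (hpiece _ hw₂ hzero₂ (sum_shiftMass w b a t₂) (hN ▸ hN₂))
    (div_nonneg ht₂.le (by positivity)) (div_nonneg ht₁.le (by positivity))
    (by field_simp; ring)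
  rwa [hcombo] at this

theorem mem_convexHull_sparse {α : ℝ} (hα : 0 < α) {r : ℕ} {v : ι → ℝ}
    (hv : ∀ i, |v i| ≤ α) (hsum : ∑ i, |v i| ≤ r * α) :
    v ∈ convexHull ℝ {u | (∀ i, |u i| ≤ α) ∧ (∀ i, v i = 0 → u i = 0) ∧
      #{i | u i ≠ 0} ≤ r ∧ ∑ i, |u i| = ∑ i, |v i|} := by
  let σ : (ι → ℝ) →ₗ[ℝ] ι → ℝ := LinearMap.pi fun i => (SignType.sign (v i) : ℝ) • LinearMap.proj i
  have hσ : ∀ x i, σ x i = SignType.sign (v i) * x i := fun _ _ => rfl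
  have hσv : σ (fun i => |v i|) = v := funext fun i => by rw [hσ, sign_mul_abs]
  have := Set.mem_image_of_mem σ <|
    mem_convexHull_nonneg_sparse hα (w := fun i => |v i|) (fun i => ⟨abs_nonneg _, hv i⟩) hsum
  rw [LinearMap.image_convexHull, hσv] at this
  refine convexHull_mono ?_ this
  rintro _ ⟨u, ⟨hu, huzero, hucard, husum⟩, rfl⟩
  have habs : ∀ i, |σ u i| = u i := by
    intro i
    rw [hσ, abs_mul, abs_of_nonneg (hu i).1]
    rcases lt_trichotomy (v i) 0 with hi | hi | hi
    · simp [hi]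
    · simp [huzero i (by simp [hi])]
    · simp [hi]
  refine ⟨fun i => habs i ▸ (hu i).2, fun i hi => ?_, ?_, ?_⟩
  · simp [hσ, huzero i (by simp [hi])]
  · refine le_trans (card_le_card fun i => ?_) hucard
    simp only [mem_filter, mem_univ, true_and, hσ]
    exact right_ne_zero_of_mul
  · simp only [habs, husum]

end SparseDecomposition

lemma rpow_sum_abs_rpow_le {ι : Type*} (S : Finset ι) (x : ι → ℝ) {q : ℝ} (hq0 : 0 < q)
    (hq2 : q ≤ 2) :
    (∑ i ∈ S, |x i| ^ q) ^ (2 / q) ≤ (#S : ℝ) ^ (2 / q - 1) * ∑ i ∈ S, x i ^ 2 := by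
  have := Real.rpow_sum_le_const_mul_sum_rpow_of_nonneg S (f := fun i => |x i| ^ q)
    ((one_le_div hq0).mpr hq2) fun i _ => by positivity
  convert this using 3 with i
  rw [← Real.rpow_mul (abs_nonneg _), mul_div_cancel₀ _ hq0.ne', Real.rpow_two, sq_abs]

lemma sq_mul_le_sum_sq_of_sum_rpow_eq {ι : Type*} {S : Finset ι} {x : ι → ℝ} {q : ℝ}
    (hq0 : 0 < q) (hq2 : q ≤ 2) {κ : ℝ} (hκ : 0 < κ) (hS : #S ≤ κ) {s : ℝ} (hs : 0 < s)
    (hsum : ∑ i ∈ S, |x i| ^ q = s ^ q * κ) :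
    s ^ 2 * κ ≤ ∑ i ∈ S, x i ^ 2 := by
  have hpow : 0 < κ ^ (2 / q - 1) := by positivity
  have hholder := (rpow_sum_abs_rpow_le S x hq0 hq2).trans <|
    mul_le_mul_of_nonneg_right (Real.rpow_le_rpow (by positivity) hS
      (by rw [sub_nonneg, one_le_div hq0]; exact hq2)) (sum_nonneg fun i _ => sq_nonneg (x i))
  have hsplit : κ ^ (2 / q) = κ * κ ^ (2 / q - 1) := by
    rw [Real.rpow_sub hκ, Real.rpow_one]; field_simp
  rw [hsum, Real.mul_rpow (by positivity) hκ.le, ← Real.rpow_mul hs.le,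
    mul_div_cancel₀ _ hq0.ne', Real.rpow_two, hsplit] at hholder
  exact le_of_mul_le_mul_right (by linarith) hpow

section RestrictedIsometry

variable {n p : ℕ} (A : Matrix (Fin n) (Fin p) ℝ) (m : ℕ)

lemma sum_sq_eq_dotProduct (x : Fin p → ℝ) : ∑ i, x i ^ 2 = x ⬝ᵥ x := by
  simp [dotProduct, sq]

lemma ric_mem : ric A m ∈ {δ : ℝ | 0 ≤ δ ∧ ∀ x : Fin p → ℝ, Sparse m x →
    (1 - δ) * (∑ i, (x i) ^ 2) ≤ (∑ i, (A.mulVec x i) ^ 2) ∧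
    (∑ i, (A.mulVec x i) ^ 2) ≤ (1 + δ) * (∑ i, (x i) ^ 2)} := by
  have hclosed : IsClosed {δ : ℝ | 0 ≤ δ ∧ ∀ x : Fin p → ℝ, Sparse m x →
      (1 - δ) * (∑ i, (x i) ^ 2) ≤ (∑ i, (A.mulVec x i) ^ 2) ∧
      (∑ i, (A.mulVec x i) ^ 2) ≤ (1 + δ) * (∑ i, (x i) ^ 2)} := by
    simp only [Set.ofPred_and, Set.ofPred_forall]
    exact (isClosed_le continuous_const continuous_id).inter <|
      isClosed_iInter fun x => isClosed_iInter fun _ =>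
        (isClosed_le (by fun_prop) continuous_const).inter
          (isClosed_le continuous_const (by fun_prop))
  refine hclosed.csInf_mem ⟨1 + ∑ i, ∑ j, A i j ^ 2, by positivity, fun x _ => ?_⟩
    ⟨0, fun δ hδ => hδ.1⟩
  have hrows : ∑ i, (A *ᵥ x) i ^ 2 ≤ (∑ i, ∑ j, A i j ^ 2) * ∑ i, x i ^ 2 := by
    rw [sum_mul]
    exact sum_le_sum fun i _ => sum_mul_sq_le_sq_mul_sq univ (A i) x
  constructor <;> nlinarith [sum_nonneg fun i (_ : i ∈ univ) => sq_nonneg (x i),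
    sum_nonneg fun i (_ : i ∈ univ) => sq_nonneg ((A *ᵥ x) i)]

lemma ric_nonneg : 0 ≤ ric A m := (ric_mem A m).1

variable {A m} in
lemma rip_ric {x : Fin p → ℝ} (hx : Sparse m x) :
    (1 - ric A m) * (x ⬝ᵥ x) ≤ (A *ᵥ x) ⬝ᵥ (A *ᵥ x) ∧
      (A *ᵥ x) ⬝ᵥ (A *ᵥ x) ≤ (1 + ric A m) * (x ⬝ᵥ x) := by
  simpa only [sum_sq_eq_dotProduct] using (ric_mem A m).2 x hx

variable {A m}

lemma sparse_of_support_subset {x : Fin p → ℝ} (F : Finset (Fin p)) (hF : #F ≤ m)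
    (hx : ∀ i, x i ≠ 0 → i ∈ F) : Sparse m x := by
  unfold Sparse l0
  exact (card_le_card fun i hi => hx i (mem_filter.mp hi).2).trans hF

lemma rip_pair_bound {g u : Fin p → ℝ} (hsparse : ∀ a b : ℝ, Sparse m (a • g + b • u))
    (horth : g ⬝ᵥ u = 0) {μ ν : ℝ} (hμν : 2 * μ + ν = 1) :
    (1 - ν ^ 2) * (g ⬝ᵥ g) - ric A m * ((1 + ν ^ 2) * (g ⬝ᵥ g) + 2 * μ ^ 2 * (u ⬝ᵥ u)) ≤
      (1 - ν ^ 2) * ((A *ᵥ g) ⬝ᵥ (A *ᵥ g) + (A *ᵥ g) ⬝ᵥ (A *ᵥ u)) := by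
  have hlower := (rip_ric (A := A) (hsparse 1 μ)).1
  have hupper := (rip_ric (A := A) (hsparse (-ν) μ)).2
  simp only [mulVec_add, mulVec_smul, dotProduct_add, add_dotProduct, dotProduct_smul,
    smul_dotProduct, smul_eq_mul, dotProduct_comm u g, horth,
    dotProduct_comm (A *ᵥ u) (A *ᵥ g)] at hlower hupper
  obtain rfl : ν = 1 - 2 * μ := by linarith
  linarith

lemma rip_convexHull_bound {c : ℝ} {g t : Fin p → ℝ} {U : Set (Fin p → ℝ)}
    (hg : g ≠ 0) (hnull : A *ᵥ (g + t) = 0) (ht : t ∈ convexHull ℝ U)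
    (hsparse : ∀ u ∈ U, ∀ a b : ℝ, Sparse m (a • g + b • u)) (horth : ∀ u ∈ U, g ⬝ᵥ u = 0)
    (hnorm : ∀ u ∈ U, u ⬝ᵥ u ≤ c * (g ⬝ᵥ g)) {μ ν : ℝ} (hμν : 2 * μ + ν = 1) :
    1 - ν ^ 2 ≤ ric A m * (1 + ν ^ 2 + 2 * μ ^ 2 * c) := by
  set X := g ⬝ᵥ g
  have hX : 0 < X := (Fintype.sum_nonneg fun i => mul_self_nonneg (g i)).lt_of_ne'
    (dotProduct_self_eq_zero.not.mpr hg)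
  set C := (1 - ν ^ 2) * X - ric A m * (1 + ν ^ 2 + 2 * μ ^ 2 * c) * X
  -- the bound of `rip_pair_bound` is affine in `u`, so it passes to the convex hull
  have hhalf : Convex ℝ {u | C - (1 - ν ^ 2) * ((A *ᵥ g) ⬝ᵥ (A *ᵥ g)) ≤
      (1 - ν ^ 2) * ((A *ᵥ g) ⬝ᵥ (A *ᵥ u))} :=
    convex_halfSpace_ge ⟨fun x y => by simp [mulVec_add, mul_add],
      fun a x => by simp [mulVec_smul]; ring⟩ _
  have hU : U ⊆ {u | C - (1 - ν ^ 2) * ((A *ᵥ g) ⬝ᵥ (A *ᵥ g)) ≤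
      (1 - ν ^ 2) * ((A *ᵥ g) ⬝ᵥ (A *ᵥ u))} := by
    intro u hu
    have := rip_pair_bound (A := A) (hsparse u hu) (horth u hu) hμν
    have := mul_le_mul_of_nonneg_left (hnorm u hu) (mul_nonneg (ric_nonneg A m) (sq_nonneg μ))
    simp only [Set.mem_ofPred_eq, C]
    linarith
  have hAt : A *ᵥ t = -(A *ᵥ g) := by
    rw [mulVec_add] at hnull; exact eq_neg_of_add_eq_zero_right hnull
  have ht' := convexHull_min hU hhalf ht
  simp only [Set.mem_ofPred_eq, hAt, dotProduct_neg, C] at ht'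
  exact le_of_mul_le_mul_right (by linarith) hX

theorem one_le_ric_mul_sqrt {c : ℝ} (hc : 0 ≤ c) {g t : Fin p → ℝ} {U : Set (Fin p → ℝ)}
    (hg : g ≠ 0) (hnull : A *ᵥ (g + t) = 0) (ht : t ∈ convexHull ℝ U)
    (hsparse : ∀ u ∈ U, ∀ a b : ℝ, Sparse m (a • g + b • u)) (horth : ∀ u ∈ U, g ⬝ᵥ u = 0)
    (hnorm : ∀ u ∈ U, u ⬝ᵥ u ≤ c * (g ⬝ᵥ g)) :
    1 ≤ ric A m * √(c + 1) := by
  set d := √(c + 1)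
  have hd : c = d ^ 2 - 1 := by rw [Real.sq_sqrt (by linarith)]; ring
  have hd0 : 0 ≤ d := Real.sqrt_nonneg _
  -- `μ = 1 / (1 + d)`, `ν = 1 - 2μ` make `(1 + ν² + 2μ²c) / (1 - ν²)` equal to `d`
  have hbound := rip_convexHull_bound hg hnull ht hsparse horth hnorm
    (show 2 * (1 / (1 + d)) + (d - 1) / (1 + d) = 1 by field_simp; ring)
  rw [hd] at hbound
  have hν : (0 : ℝ) < 1 - ((d - 1) / (1 + d)) ^ 2 := by
    rw [div_pow, sub_pos, div_lt_one (by positivity)]; nlinarith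
  have hopt : 1 + ((d - 1) / (1 + d)) ^ 2 + 2 * (1 / (1 + d)) ^ 2 * (d ^ 2 - 1) =
      d * (1 - ((d - 1) / (1 + d)) ^ 2) := by
    field_simp; ring
  rw [hopt, ← mul_assoc] at hbound
  exact le_of_mul_le_mul_right (by linarith) hν

theorem one_le_ric_mul_sqrt_of_head_tail {c : ℝ} (hc : 0 ≤ c) {h : Fin p → ℝ}
    (hnull : A *ᵥ h = 0) {G : Finset (Fin p)} (hsmall : ∀ i ∉ G, |h i| ≤ 1)
    (hbudget : #G + ∑ i ∈ Gᶜ, |h i| ≤ m)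
    (hhead : 0 < ∑ i ∈ G, h i ^ 2) (hratio : ∑ i ∈ Gᶜ, |h i| ≤ c * ∑ i ∈ G, h i ^ 2) :
    1 ≤ ric A m * √(c + 1) := by
  set g : Fin p → ℝ := fun i => if i ∈ G then h i else 0
  have hgg : g ⬝ᵥ g = ∑ i ∈ G, h i ^ 2 := by
    simp [g, dotProduct, apply_ite, sq, ite_mul, sum_ite_mem]
  have htail : ∀ i, (h - g) i = if i ∈ G then 0 else h i := fun i => by
    by_cases hi : i ∈ G <;> simp [g, hi]
  have htail_sum : ∑ i, |(h - g) i| = ∑ i ∈ Gᶜ, |h i| := by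
    rw [← sum_compl_add_sum G, sum_eq_zero (s := G) fun i hi => by simp [htail, hi], add_zero]
    exact sum_congr rfl fun i hi => by simp [htail, mem_compl.mp hi]
  have hG : #G ≤ m := by
    have : (#G : ℝ) ≤ m := by linarith [sum_nonneg fun i (_ : i ∈ Gᶜ) => abs_nonneg (h i)]
    exact_mod_cast this
  have hr : ∑ i, |(h - g) i| ≤ ↑(m - #G) * 1 := by
    rw [Nat.cast_sub hG, mul_one, htail_sum]
    linarith
  refine one_le_ric_mul_sqrt (g := g) hc (fun hg0 => ?_) (by simpa using hnull)
    (mem_convexHull_sparse one_pos (fun i => ?_) hr) ?_ ?_ ?_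
  · rw [hg0, zero_dotProduct] at hgg
    linarith
  · rw [htail]; split_ifs with hi
    · simp
    · exact hsmall i hi
  · rintro u ⟨-, hu0, hucard, -⟩ a b
    refine sparse_of_support_subset (G ∪ ({i | u i ≠ 0} : Finset _))
      ((card_union_le _ _).trans (by omega)) fun i hi => ?_
    by_cases hiG : i ∈ G
    · exact mem_union_left _ hiG
    · refine mem_union_right _ (mem_filter.mpr ⟨mem_univ _, fun hu => hi ?_⟩)
      simp [g, hiG, hu]
  · rintro u ⟨-, hu0, -, -⟩
    refine sum_eq_zero fun i _ => ?_
    by_cases hiG : i ∈ G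
    · simp [hu0 i (by simp [htail, hiG])]
    · simp [g, hiG]
  · rintro u ⟨hu1, -, -, husum⟩
    calc u ⬝ᵥ u ≤ ∑ i, |u i| := sum_le_sum fun i _ => by
          rw [← abs_mul_abs_self]; exact mul_le_of_le_one_right (abs_nonneg _) (hu1 i)
      _ ≤ c * (g ⬝ᵥ g) := by rw [husum, htail_sum, hgg]; exact hratio

end RestrictedIsometry

theorem one_le_ric_mul_sqrt_of_cone_of_eq {n p : ℕ} (A : Matrix (Fin n) (Fin p) ℝ) {q : ℝ}
    (hq0 : 0 < q) (hq1 : q ≤ 1) {k : ℕ} (hk : 0 < k) {s : ℝ} (hs : 0 < s) {m : ℕ}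
    (hm : (s ^ q + 1) * k ≤ m) {h : Fin p → ℝ} (hnull : A *ᵥ h = 0) {T : Finset (Fin p)}
    (hT : #T ≤ k) (hcone : ∑ i ∈ Tᶜ, |h i| ^ q ≤ ∑ i ∈ T, |h i| ^ q)
    (hW : ∑ i ∈ T, |h i| ^ q = s ^ q * k) :
    1 ≤ ric A m * √(s ^ (q - 2) + 1) := by
  -- the threshold `1` is the paper's `α = (‖h_T‖_q^q / (s^q k))^(1/q)`, normalised by `hW`
  set G := T ∪ ({i | 1 < |h i|} : Finset (Fin p))
  have hTG : T ⊆ G := subset_union_left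
  have hlarge : ∀ i ∈ G \ T, 1 ≤ |h i| := fun i hi =>
    le_of_lt (by simpa [G, (mem_sdiff.mp hi).2] using (mem_sdiff.mp hi).1)
  have hsmall : ∀ i ∉ G, |h i| ≤ 1 := fun i hi =>
    not_lt.mp fun hlt => hi (mem_union_right _ (by simpa using hlt))
  set E := ∑ i ∈ G \ T, |h i| ^ q
  set R := ∑ i ∈ Gᶜ, |h i| ^ q
  have hER : E + R ≤ s ^ q * k := by
    rwa [← sum_sdiff (compl_subset_compl.mpr hTG), compl_sdiff_compl, hW] at hcone
  have hE : 0 ≤ E := sum_nonneg fun i _ => by positivity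
  have hcard : (#(G \ T) : ℝ) ≤ E := by
    simpa using card_nsmul_le_sum _ _ 1 fun i hi => Real.one_le_rpow (hlarge i hi) hq0.le
  have htail : ∑ i ∈ Gᶜ, |h i| ≤ R := sum_le_sum fun i hi =>
    Real.self_le_rpow_of_le_one (abs_nonneg _) (hsmall i (mem_compl.mp hi)) hq1
  have hTk : (#T : ℝ) ≤ k := by exact_mod_cast hT
  have hTsq : s ^ 2 * k ≤ ∑ i ∈ T, h i ^ 2 :=
    sq_mul_le_sum_sq_of_sum_rpow_eq hq0 (by linarith) (by exact_mod_cast hk) hTk hs hW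
  have hGTsq : E ≤ ∑ i ∈ G \ T, h i ^ 2 := sum_le_sum fun i hi => calc
    |h i| ^ q ≤ |h i| ^ (2 : ℝ) := Real.rpow_le_rpow_of_exponent_le (hlarge i hi) (by linarith)
    _ = h i ^ 2 := by rw [Real.rpow_two, sq_abs]
  have hhead : s ^ 2 * k + E ≤ ∑ i ∈ G, h i ^ 2 := by
    rw [← sum_sdiff hTG]; linarith
  have hc : s ^ (q - 2) * s ^ 2 = s ^ q := by
    rw [← Real.rpow_two, ← Real.rpow_add hs, sub_add_cancel]
  refine one_le_ric_mul_sqrt_of_head_tail (by positivity) hnull hsmall ?_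
    (lt_of_lt_of_le (by positivity) hhead) ?_
  · rw [← card_sdiff_add_card_eq_card hTG]
    push_cast
    linarith
  · calc ∑ i ∈ Gᶜ, |h i| ≤ s ^ (q - 2) * (s ^ 2 * k) - E := by rw [← mul_assoc, hc]; linarith
      _ ≤ s ^ (q - 2) * (s ^ 2 * k + E) := by nlinarith [Real.rpow_nonneg hs.le (q - 2)]
      _ ≤ s ^ (q - 2) * ∑ i ∈ G, h i ^ 2 := by gcongr

theorem one_le_ric_mul_sqrt_of_cone {n p : ℕ} (A : Matrix (Fin n) (Fin p) ℝ) {q : ℝ}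
    (hq0 : 0 < q) (hq1 : q ≤ 1) {k : ℕ} (hk : 0 < k) {s : ℝ} (hs : 0 < s) {m : ℕ}
    (hm : (s ^ q + 1) * k ≤ m) {h : Fin p → ℝ} (hnull : A *ᵥ h = 0) {T : Finset (Fin p)}
    (hT : #T ≤ k) (hcone : ∑ i ∈ Tᶜ, |h i| ^ q ≤ ∑ i ∈ T, |h i| ^ q)
    (hW : 0 < ∑ i ∈ T, |h i| ^ q) :
    1 ≤ ric A m * √(s ^ (q - 2) + 1) := by
  set c := (s ^ q * k / ∑ i ∈ T, |h i| ^ q) ^ q⁻¹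
  have hc : c ^ q = s ^ q * k / ∑ i ∈ T, |h i| ^ q :=
    Real.rpow_inv_rpow (by positivity) hq0.ne'
  have hc0 : 0 ≤ c := by positivity
  have hscale : ∀ S : Finset (Fin p), ∑ i ∈ S, |(c • h) i| ^ q = c ^ q * ∑ i ∈ S, |h i| ^ q :=
    fun S => by
      simp only [Pi.smul_apply, smul_eq_mul, abs_mul, abs_of_nonneg hc0, mul_sum]
      exact sum_congr rfl fun i _ => Real.mul_rpow hc0 (abs_nonneg _)
  refine one_le_ric_mul_sqrt_of_cone_of_eq A hq0 hq1 hk hs hm (h := c • h)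
    (by rw [mulVec_smul, hnull, smul_zero]) hT ?_ ?_
  · rw [hscale, hscale]
    exact mul_le_mul_of_nonneg_left hcone (by positivity)
  · rw [hscale, hc, div_mul_cancel₀ _ hW.ne']

lemma lqq_ite {p : ℕ} {q : ℝ} (hq : q ≠ 0) (T : Finset (Fin p)) (v : Fin p → ℝ) :
    lqq q (fun i => if i ∈ T then v i else 0) = ∑ i ∈ T, |v i| ^ q := by
  simp [lqq, apply_ite, Real.zero_rpow hq, sum_ite_mem]

lemma eq_zero_of_cone_of_nonpos {p : ℕ} {q : ℝ} (hq : q ≠ 0) {h : Fin p → ℝ}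
    {T : Finset (Fin p)} (hcone : ∑ i ∈ Tᶜ, |h i| ^ q ≤ ∑ i ∈ T, |h i| ^ q)
    (hW : ∑ i ∈ T, |h i| ^ q ≤ 0) : h = 0 := by
  have hall : ∑ i, |h i| ^ q = 0 := le_antisymm (by rw [← sum_compl_add_sum T]; linarith)
    (sum_nonneg fun i _ => by positivity)
  funext i
  simpa [Real.rpow_eq_zero (abs_nonneg _) hq] using
    (sum_eq_zero_iff_of_nonneg fun j _ => by positivity).mp hall i (mem_univ i)

/-- **Null space property.** Under the RIC condition, any `h` in the null space of `A`
satisfying the cone condition `‖h_{-max(k)}‖_q^q ≤ ‖h_{max(k)}‖_q^q` must vanish. -/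
theorem null_space_property {n p : ℕ} (q : ℝ) (hq0 : 0 < q) (hq1 : q < 1)
    (k : ℕ) (hk : 0 < k) (s : ℝ) (hs : 0 < s)
    (A : Matrix (Fin n) (Fin p) ℝ)
    (hric : ric A ⌈(s ^ q + 1) * (k : ℝ)⌉₊ < 1 / Real.sqrt (s ^ (q - 2) + 1))
    (h hmaxk : Fin p → ℝ) (hmax : IsMaxK k h hmaxk)
    (hnull : A.mulVec h = 0)
    (hcone : lqq q (h - hmaxk) ≤ lqq q hmaxk) :
    h = 0 := by
  obtain ⟨T, hTcard, -, rfl⟩ := hmax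
  have hsub : (h - fun i => if i ∈ T then h i else 0) = fun i => if i ∈ Tᶜ then h i else 0 := by
    ext i; by_cases hi : i ∈ T <;> simp [hi]
  rw [hsub, lqq_ite hq0.ne', lqq_ite hq0.ne'] at hcone
  by_contra hne
  have hW := lt_of_not_ge (mt (eq_zero_of_cone_of_nonpos hq0.ne' hcone) hne)
  have := one_le_ric_mul_sqrt_of_cone A hq0 hq1.le hk hs (Nat.le_ceil _) hnull
    (hTcard.trans_le (min_le_left _ _)) hcone hW
  rw [lt_div_iff₀ (Real.sqrt_pos.mpr (by positivity))] at hric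
  linarith
end

section
/- Let A ∈ ℝ^{n×p}, let m be a positive integer, let w ∈ ℝ^p be m-sparse, and let h ∈ ℝ^p. Then ⟨Aw, Ah⟩ ≤ √m·‖w‖_2·‖Aᵀ(Ah)‖_∞. -/
open scoped BigOperators

/-- For `m`-sparse `w`: `⟨Aw, Ah⟩ ≤ √m ‖w‖₂ ‖Aᵀ(Ah)‖_∞`. -/
theorem inner_mulVec_le_sqrt_mul_linf {n p : ℕ} (A : Matrix (Fin n) (Fin p) ℝ)
    (m : ℕ) (hm : 0 < m) (w h : Fin p → ℝ) (hw : Sparse m w) :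
    (∑ i, A.mulVec w i * A.mulVec h i) ≤
      Real.sqrt (m : ℝ) * l2Norm w * linfNorm (A.transpose.mulVec (A.mulVec h)) := by
  classical
  set v := A.mulVec h with hv
  set u := A.transpose.mulVec v with hu
  have key : (∑ i, A.mulVec w i * v i) = ∑ j, w j * u j := by
    simp only [hu, Matrix.mulVec, dotProduct, Matrix.transpose_apply,
      Finset.sum_mul, Finset.mul_sum]
    rw [Finset.sum_comm]
    exact Finset.sum_congr rfl fun j _ => Finset.sum_congr rfl fun i _ => by ring
  have hM0 : 0 ≤ linfNorm u := Real.iSup_nonneg fun i => abs_nonneg _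
  have hM : ∀ j, |u j| ≤ linfNorm u := fun j =>
    le_ciSup (f := fun i => |u i|) (Set.Finite.bddAbove (Set.finite_range _)) j
  have step1 : ∑ j, w j * u j ≤ (∑ j, |w j|) * linfNorm u := by
    rw [Finset.sum_mul]
    refine Finset.sum_le_sum fun j _ => ?_
    calc w j * u j ≤ |w j * u j| := le_abs_self _
      _ = |w j| * |u j| := abs_mul _ _
      _ ≤ |w j| * linfNorm u := mul_le_mul_of_nonneg_left (hM j) (abs_nonneg _)
  set S : Finset (Fin p) := Finset.univ.filter (fun j => w j ≠ 0) with hS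
  have step2 : ∑ j, |w j| ≤ Real.sqrt m * l2Norm w := by
    have h1 : ∑ j, |w j| = ∑ j ∈ S, |w j| := by
      refine (Finset.sum_subset S.subset_univ fun j _ hj => ?_).symm
      simp only [hS, Finset.mem_filter, Finset.mem_univ, true_and, not_not] at hj
      simp [hj]
    have h2 : ∑ j ∈ S, |w j| ≤ Real.sqrt (∑ j ∈ S, (1:ℝ)^2) * Real.sqrt (∑ j ∈ S, |w j|^2) := by
      simpa using Real.sum_mul_le_sqrt_mul_sqrt S (fun _ => (1:ℝ)) (fun j => |w j|)
    have h3 : (∑ j ∈ S, (1:ℝ)^2) = (S.card : ℝ) := by simp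
    have h4 : (S.card : ℝ) ≤ (m : ℝ) := by exact_mod_cast hw
    have h5 : (∑ j ∈ S, |w j|^2) ≤ ∑ j, (w j)^2 := by
      calc (∑ j ∈ S, |w j|^2) = ∑ j ∈ S, (w j)^2 := by simp [sq_abs]
        _ ≤ ∑ j, (w j)^2 := Finset.sum_le_sum_of_subset_of_nonneg S.subset_univ
            (fun j _ _ => sq_nonneg _)
    calc ∑ j, |w j| = ∑ j ∈ S, |w j| := h1
      _ ≤ Real.sqrt (∑ j ∈ S, (1:ℝ)^2) * Real.sqrt (∑ j ∈ S, |w j|^2) := h2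
      _ ≤ Real.sqrt m * l2Norm w := by
          rw [h3]
          exact mul_le_mul (Real.sqrt_le_sqrt h4) (Real.sqrt_le_sqrt h5)
            (Real.sqrt_nonneg _) (Real.sqrt_nonneg _)
  calc (∑ i, A.mulVec w i * A.mulVec h i) = ∑ j, w j * u j := key
    _ ≤ (∑ j, |w j|) * linfNorm u := step1
    _ ≤ Real.sqrt m * l2Norm w * linfNorm u := mul_le_mul_of_nonneg_right step2 hM0
end
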